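/- Let M be a finite matroid of rank n ≥ 3 with ground set E, and let e and f be distinct elements of E such that e is free in M, f is free in the dual (M \ e)✶, and the minor (M \ e) / f has rank n − 1 and admits a partition of its ground set into two sets A and B that are both circuit-hyperplanes of (M \ e) / f, with every non-spanning circuit of (M \ e) / f equal to A or to B (so (M \ e) / f is isomorphic to P_{n−1}). Then M is isomorphic to its own dual M✶. (That is, the matroid A_n is self-dual.) -/

import Mathlib

/-!
Call a matroid *uniform except `P, Q`* if its bases are the `r`-subsets of the ground set other
than `P` and `Q`. Since the only non-spanning circuits of `N = (M ＼ e) ／ f` are the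
circuit-hyperplanes `A` and `B`, `N` is uniform except `A, B`, and as `B` is the complement of
`A`, its dual is uniform except `B, A`. Adding a free element to a matroid that is uniform except
`P, Q` on at least `r + 2` elements keeps it uniform except `P, Q`: every set of fewer than `r`
elements is independent, and a free element extends every independent set smaller than a base.
So `(M ＼ e)✶` is uniform except `B, A`; dualising, `M ＼ e` and then `M` are uniform except
`A + f, B + f`, and `M✶` is uniform except `A + e, B + e`. The transposition of `e` and `f` carries the first description to the second.
-/

open Set

namespace Matroid

variable {α β : Type*}

/-- A circuit of a matroid is a minimal dependent set. -/
def Circuit (M : Matroid α) (C : Set α) : Prop :=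
  M.Dep C ∧ ∀ ⦃D : Set α⦄, M.Dep D → D ⊆ C → D = C

/-- The rank of a set `X` in a matroid `M` : the maximum cardinality of an
independent subset of `X`. -/
noncomputable def rkOn (M : Matroid α) (X : Set α) : ℕ :=
  sSup {n | ∃ I, M.Indep I ∧ I ⊆ X ∧ I.ncard = n}

/-- The rank of a matroid : the rank of its ground set. -/
noncomputable def rank (M : Matroid α) : ℕ := M.rkOn M.E

/-- A hyperplane : a flat whose rank is one less than the rank of the matroid. -/
def Hyperplane (M : Matroid α) (H : Set α) : Prop :=
  M.IsFlat H ∧ M.rkOn H + 1 = M.rank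

/-- Deletion of the set `D` from the matroid `M`. -/
def delete' (M : Matroid α) (D : Set α) : Matroid α := M.restrict (M.E \ D)

/-- Contraction of the set `C` in the matroid `M`. -/
def contract' (M : Matroid α) (C : Set α) : Matroid α := ((M✶).delete' C)✶

/-- A circuit `C` of `M` is freely placed if every circuit `C'` of `M` with `C' ≠ C`
and `C' ∩ C ≠ ∅` is spanning. -/
def FreelyPlaced (M : Matroid α) (C : Set α) : Prop :=
  ∀ ⦃C' : Set α⦄, M.Circuit C' → C' ≠ C → (C' ∩ C).Nonempty → M.Spanning C'

/-- A coloop is an element belonging to every base. -/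
def Coloop (M : Matroid α) (e : α) : Prop := ∀ ⦃B : Set α⦄, M.IsBase B → e ∈ B

/-- An element `e` is free in `M` if it is not a coloop and every circuit
containing `e` is spanning. -/
def FreeElem (M : Matroid α) (e : α) : Prop :=
  e ∈ M.E ∧ ¬ M.Coloop e ∧ ∀ ⦃C : Set α⦄, M.Circuit C → e ∈ C → M.Spanning C

/-- A loop is an element `e` such that `{e}` is a circuit. -/
def IsLoop' (M : Matroid α) (e : α) : Prop := M.Circuit {e}

/-- Two non-loop elements of the ground set are parallel if they are equal or
form a two-element circuit. -/
def Parallel (M : Matroid α) (e f : α) : Prop :=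
  e ∈ M.E ∧ f ∈ M.E ∧ ¬ M.IsLoop' e ∧ ¬ M.IsLoop' f ∧ (e = f ∨ M.Circuit {e, f})

/-- Two matroids are isomorphic if there is a bijection between their ground sets
mapping independent sets to independent sets. -/
def IsIso (M : Matroid α) (N : Matroid β) : Prop :=
  ∃ e : M.E ≃ N.E, ∀ I : Set M.E,
    M.Indep (Subtype.val '' I) ↔ N.Indep (Subtype.val '' (e '' I))

lemma delete'_eq_delete (M : Matroid α) (D : Set α) : M.delete' D = M ＼ D := rfl

lemma contract'_eq_contract (M : Matroid α) (C : Set α) : M.contract' C = M ／ C := rfl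

lemma circuit_iff_isCircuit {M : Matroid α} {C : Set α} : M.Circuit C ↔ M.IsCircuit C :=
  ⟨fun h => ⟨h.1, fun _ hD hDC => (h.2 hD hDC).symm.subset⟩,
    fun h => ⟨h.prop, fun _ hD hDC => hDC.antisymm (h.2 hD hDC)⟩⟩

section Rank

variable {M : Matroid α} {C H I X : Set α} {r : ℕ}

lemma rkOn_le (h : ∀ I, M.Indep I → I ⊆ X → I.ncard ≤ r) : M.rkOn X ≤ r :=
  csSup_le ⟨0, ∅, M.empty_indep, empty_subset _, ncard_empty α⟩
    (by rintro k ⟨I, hI, hIX, rfl⟩; exact h I hI hIX)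

variable [M.Finite]

lemma le_rkOn (hI : M.Indep I) (hIX : I ⊆ X) : I.ncard ≤ M.rkOn X :=
  le_csSup ⟨M.E.ncard, by
    rintro k ⟨J, hJ, -, rfl⟩; exact ncard_le_ncard hJ.subset_ground M.ground_finite⟩
    ⟨I, hI, hIX, rfl⟩

lemma Indep.ncard_le_rank (hI : M.Indep I) : I.ncard ≤ M.rank :=
  le_rkOn hI hI.subset_ground

lemma IsBase.ncard_eq_rank (hB : M.IsBase X) : X.ncard = M.rank := by
  refine le_antisymm hB.indep.ncard_le_rank (rkOn_le fun I hI _ => ?_)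
  obtain ⟨B, hB', hIB⟩ := hI.exists_isBase_superset
  exact (ncard_le_ncard hIB hB'.finite).trans (hB'.ncard_eq_ncard_of_isBase hB).le

lemma Indep.isBase_of_ncard_eq_rank (hI : M.Indep I) (h : I.ncard = M.rank) : M.IsBase I := by
  obtain ⟨B, hB, hIB⟩ := hI.exists_isBase_superset
  rwa [eq_of_subset_of_ncard_le hIB (by rw [h, hB.ncard_eq_rank]) hB.finite]

lemma IsCircuit.rkOn_add_one (hC : M.IsCircuit C) : M.rkOn C + 1 = C.ncard := by
  obtain ⟨x, hx⟩ := hC.nonempty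
  have hpos := (ncard_pos hC.finite).2 ⟨x, hx⟩
  have hlower := le_rkOn (hC.sdiff_singleton_indep hx) sdiff_subset
  rw [ncard_sdiff_singleton_of_mem hx] at hlower
  have hupper : M.rkOn C ≤ C.ncard - 1 := rkOn_le fun I hI hIC => Nat.le_sub_one_of_lt <|
    ncard_lt_ncard (hIC.ssubset_of_ne fun h => hC.not_indep (h ▸ hI)) hC.finite
  omega

lemma IsCircuit.rank_lt_ncard_of_spanning (hC : M.IsCircuit C) (hS : M.Spanning C) :
    M.rank < C.ncard := by
  obtain ⟨B, hB, hBC⟩ := hS.exists_isBase_subset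
  rw [← hB.ncard_eq_rank]
  exact ncard_lt_ncard (hBC.ssubset_of_ne fun h => hC.not_indep (h ▸ hB.indep)) hC.finite

lemma Circuit.ncard_eq_rank_of_hyperplane (hC : M.Circuit H) (hH : M.Hyperplane H) :
    H.ncard = M.rank := by
  rw [← (circuit_iff_isCircuit.1 hC).rkOn_add_one, hH.2]

end Rank

section Free

variable {M : Matroid α} {J : Set α} {g : α} [M.Finite]

lemma FreeElem.rank_delete (hg : M.FreeElem g) : (M ＼ {g}).rank = M.rank := by
  obtain ⟨B, hB, hgB⟩ : ∃ B, M.IsBase B ∧ g ∉ B := by simpa [Coloop] using hg.2.1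
  refine le_antisymm (rkOn_le fun I hI _ => hI.of_delete.ncard_le_rank) ?_
  rw [← hB.ncard_eq_rank]
  exact (delete_indep_iff.2 ⟨hB.indep, disjoint_singleton_right.2 hgB⟩).ncard_le_rank

lemma FreeElem.insert_indep (hg : M.FreeElem g) (hJ : M.Indep J) (hJr : J.ncard < M.rank) :
    M.Indep (insert g J) := by
  by_contra hdep
  obtain ⟨C, hCJ, hC⟩ :=
    ((not_indep_iff (insert_subset hg.1 hJ.subset_ground)).1 hdep).exists_isCircuit_subset
  have hgC : g ∈ C := by
    by_contra hgC
    exact hC.not_indep (hJ.subset ((subset_insert_iff_of_notMem hgC).1 hCJ))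
  have hlt := hC.rank_lt_ncard_of_spanning (hg.2.2 (circuit_iff_isCircuit.2 hC) hgC)
  have hle := (ncard_le_ncard hCJ (hJ.finite.insert g)).trans (ncard_insert_le g J)
  omega

end Free

lemma _root_.Set.exists_mem_sdiff_insert_ne {E K P Q : Set α} (h : 2 < (E \ K).ncard) :
    ∃ x ∈ E \ K, insert x K ≠ P ∧ insert x K ≠ Q := by
  by_contra! hbad
  have hinj (R : Set α) : {x | x ∉ K ∧ insert x K = R}.Subsingleton :=
    fun x hx _ hy => (insert_inj hx.1).1 (hx.2.trans hy.2.symm)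
  have hcover :
      E \ K ⊆ {x | x ∉ K ∧ insert x K = P} ∪ {x | x ∉ K ∧ insert x K = Q} := by
    intro x hx
    by_cases hP : insert x K = P
    exacts [Or.inl ⟨hx.2, hP⟩, Or.inr ⟨hx.2, hbad x hx hP⟩]
  have := (ncard_le_ncard hcover ((hinj P).finite.union (hinj Q).finite)).trans
    (ncard_union_le _ _)
  have := (ncard_le_one_iff (hinj P).finite).2 fun ha hb => hinj P ha hb
  have := (ncard_le_one_iff (hinj Q).finite).2 fun ha hb => hinj Q ha hb
  omega

lemma _root_.Equiv.swap_image_insert [DecidableEq α] {a b : α} {S : Set α} (ha : a ∉ S)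
    (hb : b ∉ S) :
    Equiv.swap a b '' insert b S = insert a S := by
  rw [image_insert_eq, Equiv.swap_apply_right, image_congr fun x hx =>
    Equiv.swap_apply_of_ne_of_ne (ne_of_mem_of_not_mem hx ha) (ne_of_mem_of_not_mem hx hb),
    image_id']

lemma _root_.Equiv.swap_apply_mem_iff [DecidableEq α] {a b x : α} {S : Set α} (ha : a ∈ S)
    (hb : b ∈ S) : Equiv.swap a b x ∈ S ↔ x ∈ S := by
  rw [Equiv.swap_apply_def]
  split_ifs with hxa hxb
  · subst hxa; simp [ha, hb]
  · subst hxb; simp [ha, hb]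
  · rfl

def UniformExcept (M : Matroid α) (r : ℕ) (P Q : Set α) : Prop :=
  ∀ X, M.IsBase X ↔ X ⊆ M.E ∧ X.ncard = r ∧ X ≠ P ∧ X ≠ Q

namespace UniformExcept

variable {M : Matroid α} {I P Q : Set α} {g : α} {r s : ℕ}

lemma comm (h : M.UniformExcept r P Q) : M.UniformExcept r Q P :=
  fun X => (h X).trans <| by rw [and_comm (a := X ≠ P)]

lemma rank_eq [M.Finite] (h : M.UniformExcept r P Q) : M.rank = r := by
  obtain ⟨B, hB⟩ := M.exists_isBase
  rw [← hB.ncard_eq_rank, ((h B).1 hB).2.1]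

lemma indep_of_ncard_lt (h : M.UniformExcept r P Q) (hE : r + 2 ≤ M.E.ncard) (hI : I ⊆ M.E)
    (hIr : I.ncard < r) : M.Indep I := by
  obtain ⟨K, hIK, hKE, hK⟩ := exists_subsuperset_card_eq (n := r - 1) hI (by omega) (by omega)
  have hEfin : M.E.Finite := finite_of_ncard_pos (by omega)
  obtain ⟨x, hx, hxP, hxQ⟩ := Set.exists_mem_sdiff_insert_ne (P := P) (Q := Q)
    (by rw [ncard_sdiff hKE (hEfin.subset hKE)]; omega : 2 < (M.E \ K).ncard)
  have hbase : M.IsBase (insert x K) := (h _).2 ⟨insert_subset hx.1 hKE,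
    by rw [ncard_insert_of_notMem hx.2 (hEfin.subset hKE)]; omega, hxP, hxQ⟩
  exact hbase.indep.subset (hIK.trans (subset_insert x K))

lemma dual [M.Finite] {P' Q' : Set α} (h : M.UniformExcept r P Q) (hP : Disjoint P P')
    (hPE : P ∪ P' = M.E) (hQ : Disjoint Q Q') (hQE : Q ∪ Q' = M.E) (hE : M.E.ncard = r + s) :
    M✶.UniformExcept s P' Q' := by
  have hcompl {S S' : Set α} (hS : Disjoint S S') (hSE : S ∪ S' = M.E) : M.E \ S = S' :=
    hSE ▸ union_sdiff_cancel_left (disjoint_iff_inter_eq_empty.1 hS).subset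
  rw [← hcompl hP hPE, ← hcompl hQ hQE]
  have hPsub : P ⊆ M.E := hPE ▸ subset_union_left
  have hQsub : Q ⊆ M.E := hQE ▸ subset_union_left
  intro Y
  rw [dual_isBase_iff', h, dual_ground]
  constructor
  · rintro ⟨⟨-, hcard, hYP, hYQ⟩, hYE⟩
    rw [ncard_sdiff hYE (M.ground_finite.subset hYE)] at hcard
    have := ncard_le_ncard hYE M.ground_finite
    refine ⟨hYE, by omega, ?_, ?_⟩ <;> rintro rfl
    exacts [hYP (sdiff_sdiff_cancel_left hPsub), hYQ (sdiff_sdiff_cancel_left hQsub)]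
  · rintro ⟨hYE, hcard, hYP, hYQ⟩
    refine ⟨⟨sdiff_subset, ?_, fun h' => hYP ?_, fun h' => hYQ ?_⟩, hYE⟩
    · rw [ncard_sdiff hYE (M.ground_finite.subset hYE)]
      omega
    all_goals rw [← h', sdiff_sdiff_cancel_left hYE]

lemma of_delete_freeElem [M.Finite] (hg : M.FreeElem g) (h : (M ＼ {g}).UniformExcept r P Q)
    (hE : r + 2 ≤ (M.E \ {g}).ncard) (hgP : g ∉ P) (hgQ : g ∉ Q) : M.UniformExcept r P Q := by
  have hrank : M.rank = r := hg.rank_delete.symm.trans h.rank_eq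
  have hbase_delete {X : Set α} (hX : M.IsBase X) (hgX : g ∉ X) : (M ＼ {g}).IsBase X :=
    (delete_indep_iff.2 ⟨hX.indep, disjoint_singleton_right.2 hgX⟩).isBase_of_ncard_eq_rank
      (by rw [hX.ncard_eq_rank, hg.rank_delete])
  intro X
  constructor
  · intro hX
    refine ⟨hX.subset_ground, hX.ncard_eq_rank.trans hrank, ?_, ?_⟩ <;> rintro rfl
    exacts [((h X).1 (hbase_delete hX hgP)).2.2.1 rfl, ((h X).1 (hbase_delete hX hgQ)).2.2.2 rfl]
  · rintro ⟨hXE, hXr, hXP, hXQ⟩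
    refine Indep.isBase_of_ncard_eq_rank ?_ (hXr.trans hrank.symm)
    by_cases hgX : g ∈ X
    · have hXg : (X \ {g}).ncard < r := hXr ▸ ncard_sdiff_singleton_lt_of_mem hgX
          (M.ground_finite.subset hXE)
      have hind := h.indep_of_ncard_lt hE (sdiff_subset_sdiff_left hXE) hXg
      simpa [hgX] using hg.insert_indep hind.of_delete (hrank ▸ hXg)
    · exact ((h X).2 ⟨subset_sdiff_singleton hXE hgX, hXr, hXP, hXQ⟩).indep.of_delete

lemma of_contract_freeElem_dual [M.Finite] (hf : M✶.FreeElem g)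
    (h : (M ／ {g}).UniformExcept r P Q) (hPQ : Disjoint P Q) (hE : P ∪ Q = (M ／ {g}).E)
    (hP : P.ncard = r) (hQ : Q.ncard = r) (hr : 2 ≤ r) :
    M.UniformExcept (r + 1) (insert g P) (insert g Q) := by
  have hgPQ : g ∉ P ∪ Q := by rw [hE]; exact fun h => h.2 rfl
  have hgP : g ∉ P := fun h => hgPQ (subset_union_left h)
  have hgQ : g ∉ Q := fun h => hgPQ (subset_union_right h)
  have hME : M.E = insert g (P ∪ Q) := by
    rw [hE, contract_ground, insert_sdiff_self_of_mem (show g ∈ M.E from hf.1)]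
  have hfin : (P ∪ Q).Finite := hE ▸ (M ／ {g}).ground_finite
  have hcard : (P ∪ Q).ncard = r + r := by
    rw [ncard_union_eq hPQ (hfin.subset subset_union_left) (hfin.subset subset_union_right),
      hP, hQ]
  have hdual : (M✶ ＼ {g}).UniformExcept r Q P := by
    rw [← dual_contract]
    exact h.dual hPQ hE hPQ.symm (by rw [union_comm, hE]) (by rw [← hE, hcard])
  have hcodual : M✶.UniformExcept r Q P := hdual.of_delete_freeElem hf
    (by rw [dual_ground, ← contract_ground, ← hE, hcard]; omega) hgQ hgP
  simpa using hcodual.dual (disjoint_insert_right.2 ⟨hgQ, hPQ.symm⟩)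
    (by rw [dual_ground, hME, union_insert, union_comm])
    (disjoint_insert_right.2 ⟨hgP, hPQ⟩) (by rw [dual_ground, hME, union_insert])
    (by rw [dual_ground, hME, ncard_insert_of_notMem hgPQ hfin, hcard]; ring)

end UniformExcept

lemma uniformExcept_of_circuit_hyperplanes {M : Matroid α} [M.Finite] {P Q : Set α}
    (hP : M.Circuit P ∧ M.Hyperplane P) (hQ : M.Circuit Q ∧ M.Hyperplane Q)
    (h : ∀ C, M.Circuit C → ¬ M.Spanning C → C = P ∨ C = Q) :
    M.UniformExcept M.rank P Q := by
  have hPr := hP.1.ncard_eq_rank_of_hyperplane hP.2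
  have hQr := hQ.1.ncard_eq_rank_of_hyperplane hQ.2
  intro X
  constructor
  · intro hX
    refine ⟨hX.subset_ground, hX.ncard_eq_rank, ?_, ?_⟩ <;> rintro rfl
    exacts [hX.indep.not_dep hP.1.1, hX.indep.not_dep hQ.1.1]
  · rintro ⟨hXE, hXr, hXP, hXQ⟩
    refine Indep.isBase_of_ncard_eq_rank ?_ hXr
    by_contra hX
    obtain ⟨C, hCX, hC⟩ := ((not_indep_iff hXE).1 hX).exists_isCircuit_subset
    have hXfin := M.ground_finite.subset hXE
    have hCX' := ncard_le_ncard hCX hXfin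
    by_cases hCs : M.Spanning C
    · have := hC.rank_lt_ncard_of_spanning hCs
      omega
    rcases h C (circuit_iff_isCircuit.2 hC) hCs with rfl | rfl
    exacts [hXP (eq_of_subset_of_ncard_le hCX (by omega) hXfin).symm,
      hXQ (eq_of_subset_of_ncard_le hCX (by omega) hXfin).symm]

lemma isIso_of_perm {M N : Matroid α} (σ : Equiv.Perm α) (hE : ∀ x, x ∈ M.E ↔ σ x ∈ N.E)
    (hB : ∀ X ⊆ M.E, M.IsBase X ↔ N.IsBase (σ '' X)) : M.IsIso N := by
  have hindep (I : Set α) (hI : I ⊆ M.E) : M.Indep I ↔ N.Indep (σ '' I) := by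
    rw [indep_iff, indep_iff]
    constructor
    · rintro ⟨B, hB', hIB⟩
      exact ⟨σ '' B, (hB B hB'.subset_ground).1 hB', image_mono hIB⟩
    · rintro ⟨B, hB', hIB⟩
      have hpre : σ ⁻¹' B ⊆ M.E := fun x hx => (hE x).2 (hB'.subset_ground hx)
      refine ⟨σ ⁻¹' B, (hB _ hpre).2 ?_, image_subset_iff.1 hIB⟩
      rwa [image_preimage_eq B σ.surjective]
  refine ⟨σ.subtypeEquiv hE, fun I => ?_⟩
  rw [show Subtype.val '' (σ.subtypeEquiv hE '' I) = σ '' (Subtype.val '' I) by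
    simp only [image_image]; rfl]
  exact hindep _ (Subtype.coe_image_subset _ _)

lemma UniformExcept.isIso_of_perm {M N : Matroid α} {P Q : Set α} {r : ℕ} (σ : Equiv.Perm α)
    (hM : M.UniformExcept r P Q) (hN : N.UniformExcept r (σ '' P) (σ '' Q))
    (hE : ∀ x, x ∈ M.E ↔ σ x ∈ N.E) : M.IsIso N := by
  refine Matroid.isIso_of_perm σ hE fun X hX => ?_
  have hXN : σ '' X ⊆ N.E := image_subset_iff.2 fun x hx => (hE x).1 (hX hx)
  rw [hM, hN, ncard_image_of_injective X σ.injective, σ.injective.image_injective.ne_iff,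
    σ.injective.image_injective.ne_iff]
  simp only [hX, hXN, true_and]

lemma UniformExcept.isIso_dual {M : Matroid α} [M.Finite] {P Q : Set α} {e f : α} {r : ℕ}
    (h : M.UniformExcept r (insert f P) (insert f Q)) (hPQ : Disjoint P Q)
    (hE : M.E = insert e (insert f (P ∪ Q))) (he : e ∉ insert f (P ∪ Q)) (hf : f ∉ P ∪ Q)
    (hP : P.ncard + 1 = r) (hQ : Q.ncard + 1 = r) : M.IsIso M✶ := by
  classical
  have hef : e ≠ f := by rintro rfl; exact he (mem_insert e _)
  have heP : e ∉ P := fun h => he (subset_insert f _ (subset_union_left h))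
  have heQ : e ∉ Q := fun h => he (subset_insert f _ (subset_union_right h))
  have hfP : f ∉ P := fun h => hf (subset_union_left h)
  have hfQ : f ∉ Q := fun h => hf (subset_union_right h)
  have hfin : (P ∪ Q).Finite :=
    M.ground_finite.subset (hE ▸ (subset_insert f _).trans (subset_insert e _))
  have hcard : M.E.ncard = r + r := by
    rw [hE, ncard_insert_of_notMem he (hfin.insert f), ncard_insert_of_notMem hf hfin,
      ncard_union_eq hPQ (hfin.subset subset_union_left) (hfin.subset subset_union_right)]
    omega
  have hfeP : f ∉ insert e P := by simp [hef.symm, hfP]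
  have hfeQ : f ∉ insert e Q := by simp [hef.symm, hfQ]
  have hdual : M✶.UniformExcept r (insert e Q) (insert e P) :=
    h.dual (disjoint_insert_left.2 ⟨hfeQ, disjoint_insert_right.2 ⟨heP, hPQ⟩⟩)
      (by rw [hE, union_insert, insert_union])
      (disjoint_insert_left.2 ⟨hfeP, disjoint_insert_right.2 ⟨heQ, hPQ.symm⟩⟩)
      (by rw [hE, union_insert, insert_union, union_comm Q P]) hcard
  refine h.isIso_of_perm (Equiv.swap e f) ?_ fun x => ?_
  · rw [Equiv.swap_image_insert heP hfP, Equiv.swap_image_insert heQ hfQ]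
    exact hdual.comm
  · rw [dual_ground, Equiv.swap_apply_mem_iff (hE ▸ mem_insert e _)
      (hE ▸ mem_insert_of_mem e (mem_insert f _))]

theorem an_self_dual_general (M : Matroid α) [M.Finite] (n : ℕ) (hn : 3 ≤ n)
    (e f : α)
    (hfree : M.FreeElem e) (hfree' : ((M.delete' {e})✶).FreeElem f)
    (A B : Set α)
    (hrk : ((M.delete' {e}).contract' {f}).rank = n - 1)
    (hAB : Disjoint A B) (hU : A ∪ B = ((M.delete' {e}).contract' {f}).E)
    (hA : ((M.delete' {e}).contract' {f}).Circuit A ∧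
      ((M.delete' {e}).contract' {f}).Hyperplane A)
    (hB : ((M.delete' {e}).contract' {f}).Circuit B ∧
      ((M.delete' {e}).contract' {f}).Hyperplane B)
    (hns : ∀ C : Set α, ((M.delete' {e}).contract' {f}).Circuit C →
      ¬ ((M.delete' {e}).contract' {f}).Spanning C → C = A ∨ C = B) :
    M.IsIso M✶ := by
  simp only [delete'_eq_delete, contract'_eq_contract] at *
  have hAcard : A.ncard = n - 1 := hrk ▸ hA.1.ncard_eq_rank_of_hyperplane hA.2
  have hBcard : B.ncard = n - 1 := hrk ▸ hB.1.ncard_eq_rank_of_hyperplane hB.2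
  have hN := uniformExcept_of_circuit_hyperplanes hA hB hns
  rw [hrk] at hN
  have hD := hN.of_contract_freeElem_dual hfree' hAB hU hAcard hBcard (by omega)
  have hfAB : f ∉ A ∪ B := by rw [hU]; exact fun h => h.2 rfl
  have hDE : M.E \ {e} = insert f (A ∪ B) := by
    rw [← delete_ground, hU, contract_ground,
      insert_sdiff_self_of_mem (show f ∈ (M ＼ {e}).E from hfree'.1)]
  have heD : e ∉ insert f (A ∪ B) := by rw [← hDE]; exact fun h => h.2 rfl
  have hfin : (A ∪ B).Finite := hU ▸ (M ＼ {e} ／ {f}).ground_finite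
  have hDcard : (M.E \ {e}).ncard = 2 * n - 1 := by
    rw [hDE, ncard_insert_of_notMem hfAB hfin,
      ncard_union_eq hAB (hfin.subset subset_union_left) (hfin.subset subset_union_right),
      hAcard, hBcard]
    omega
  have hM := hD.of_delete_freeElem hfree (by omega)
    (fun h => heD (insert_subset_insert subset_union_left h))
    (fun h => heD (insert_subset_insert subset_union_right h))
  exact hM.isIso_dual hAB (by rw [← hDE, insert_sdiff_self_of_mem hfree.1]) heD hfAB
    (by omega) (by omega)

/-- The matroid `A_n` is self-dual : if `M` is a finite matroid of rank `n ≥ 3` with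
distinct elements `e` and `f` such that `e` is free in `M`, `f` is free in `(M \ e)✶`,
and `(M \ e) / f` is a copy of `P_{n-1}`, then `M` is isomorphic to its dual. -/
theorem an_self_dual (M : Matroid α) [M.Finite] (n : ℕ) (hn : 3 ≤ n) (hr : M.rank = n)
    (e f : α) (he : e ∈ M.E) (hf : f ∈ M.E) (hef : e ≠ f)
    (hfree : M.FreeElem e) (hfree' : ((M.delete' {e})✶).FreeElem f)
    (A B : Set α)
    (hrk : ((M.delete' {e}).contract' {f}).rank = n - 1)
    (hAB : Disjoint A B) (hU : A ∪ B = ((M.delete' {e}).contract' {f}).E)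
    (hA : ((M.delete' {e}).contract' {f}).Circuit A ∧
      ((M.delete' {e}).contract' {f}).Hyperplane A)
    (hB : ((M.delete' {e}).contract' {f}).Circuit B ∧
      ((M.delete' {e}).contract' {f}).Hyperplane B)
    (hns : ∀ C : Set α, ((M.delete' {e}).contract' {f}).Circuit C →
      ¬ ((M.delete' {e}).contract' {f}).Spanning C → C = A ∨ C = B) :
    M.IsIso M✶ :=
  an_self_dual_general M n hn e f hfree hfree' A B hrk hAB hU hA hB hns

end Matroid
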